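/- arXiv:2405.00485 — 2 statements merged into one kernel-verified Lean document; each statement's English description precedes it below -/
import Mathlib

section
/- Under the hypotheses: X = Σ_j α_j X^[j] with α_j ≥ 0, Σ_j α_j = 1, X, X^[j] ∈ [0,1]^n; φ : [0,1] → [0,∞) concave; |Z_i| = φ(X_i), |Z^[j]_i| = φ(X^[j]_i) for all i, j; η ∈ (0,1); and Z_merged = η Z + (1-η) Σ_j α_j Z^[j]; the Euclidean norm satisfies ‖Z_merged‖ ≤ ‖Z‖. -/
theorem poca_reduces_semantic_error
    (n m : ℕ) (φ : ℝ → ℝ)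
    (hφ : ConcaveOn ℝ (Set.Icc (0:ℝ) 1) φ)
    (hφ0 : ∀ x ∈ Set.Icc (0:ℝ) 1, 0 ≤ φ x)
    (X : Fin n → ℝ) (Xl : Fin m → Fin n → ℝ)
    (hX : ∀ i, X i ∈ Set.Icc (0:ℝ) 1)
    (hXl : ∀ j i, Xl j i ∈ Set.Icc (0:ℝ) 1)
    (α : Fin m → ℝ) (hα : ∀ j, 0 ≤ α j) (hαsum : ∑ j, α j = 1)
    (hdecomp : ∀ i, X i = ∑ j, α j * Xl j i)
    (Z : Fin n → ℝ) (Zl : Fin m → Fin n → ℝ)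
    (hZ : ∀ i, |Z i| = φ (X i))
    (hZl : ∀ j i, |Zl j i| = φ (Xl j i))
    (η : ℝ) (hη : η ∈ Set.Ioo (0:ℝ) 1)
    (Zmerged : Fin n → ℝ)
    (hZm : ∀ i, Zmerged i = η * Z i + (1 - η) * ∑ j, α j * Zl j i) :
    Real.sqrt (∑ i, (Zmerged i) ^ 2) ≤ Real.sqrt (∑ i, (Z i) ^ 2) := by
  obtain ⟨hη0, hη1⟩ := hη
  have key : ∀ i, |Zmerged i| ≤ |Z i| := by
    intro i
    have hjensen : ∑ j, α j • φ (Xl j i) ≤ φ (∑ j, α j • Xl j i) :=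
      hφ.le_map_sum (fun j _ => hα j) hαsum (fun j _ => hXl j i)
    have hsum : ∑ j, α j * φ (Xl j i) ≤ |Z i| := by
      rw [hZ i, hdecomp i]
      simpa [smul_eq_mul] using hjensen
    have h1 : |∑ j, α j * Zl j i| ≤ |Z i| := by
      calc |∑ j, α j * Zl j i| ≤ ∑ j, |α j * Zl j i| := Finset.abs_sum_le_sum_abs _ _
        _ = ∑ j, α j * φ (Xl j i) := by
            refine Finset.sum_congr rfl fun j _ => ?_
            rw [abs_mul, abs_of_nonneg (hα j), hZl j i]
        _ ≤ |Z i| := hsum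
    calc |Zmerged i| = |η * Z i + (1 - η) * ∑ j, α j * Zl j i| := by rw [hZm i]
      _ ≤ |η * Z i| + |(1 - η) * ∑ j, α j * Zl j i| := abs_add_le _ _
      _ = η * |Z i| + (1 - η) * |∑ j, α j * Zl j i| := by
          rw [abs_mul, abs_mul, abs_of_pos hη0, abs_of_nonneg (show (0:ℝ) ≤ 1 - η by linarith)]
      _ ≤ η * |Z i| + (1 - η) * |Z i| := by
          have : (0:ℝ) ≤ 1 - η := by linarith
          nlinarith [h1]
      _ = |Z i| := by ring
  apply Real.sqrt_le_sqrt
  apply Finset.sum_le_sum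
  intro i _
  have := key i
  nlinarith [abs_nonneg (Z i), abs_nonneg (Zmerged i), sq_abs (Z i), sq_abs (Zmerged i)]
end

section
/- Under Assumptions 1–3 applied at both levels of a two-level pyramid (with merge weights η, η' ∈ (0,1) and concave nonnegative φ governing all errors), if each first-level merged patch error satisfies |Z^[j]_merged,i| ≤ |Z^[j]_i| coordinatewise and the top-level merge uses the merged patch errors, then the final merged error satisfies ‖Z_final‖ ≤ ‖Z‖ where Z is the global caption error. -/
theorem two_level_poca_error_reduction
    (n m : ℕ) (φ : ℝ → ℝ)
    (hφ : ConcaveOn ℝ (Set.Icc (0:ℝ) 1) φ)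
    (hφ0 : ∀ x ∈ Set.Icc (0:ℝ) 1, 0 ≤ φ x)
    (X : Fin n → ℝ) (Xl : Fin m → Fin n → ℝ)
    (hX : ∀ i, X i ∈ Set.Icc (0:ℝ) 1)
    (hXl : ∀ j i, Xl j i ∈ Set.Icc (0:ℝ) 1)
    (α : Fin m → ℝ) (hα : ∀ j, 0 ≤ α j) (hαsum : ∑ j, α j = 1)
    (hdecomp : ∀ i, X i = ∑ j, α j * Xl j i)
    (Z : Fin n → ℝ) (Zl Zlmerged : Fin m → Fin n → ℝ)
    (hZ : ∀ i, |Z i| = φ (X i))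
    (hZl : ∀ j i, |Zl j i| = φ (Xl j i))
    (hZlm : ∀ j i, |Zlmerged j i| ≤ |Zl j i|)
    (η : ℝ) (hη : η ∈ Set.Ioo (0:ℝ) 1)
    (Zfinal : Fin n → ℝ)
    (hZf : ∀ i, Zfinal i = η * Z i + (1 - η) * ∑ j, α j * Zlmerged j i) :
    Real.sqrt (∑ i, (Zfinal i) ^ 2) ≤ Real.sqrt (∑ i, (Z i) ^ 2) := by
  obtain ⟨hη0, hη1⟩ := hη
  have key : ∀ i, |Zfinal i| ≤ |Z i| := by
    intro i
    have jensen : (∑ j, α j * φ (Xl j i)) ≤ φ (X i) := by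
      have := hφ.le_map_sum (t := Finset.univ) (w := α) (p := fun j => Xl j i)
        (fun j _ => hα j) hαsum (fun j _ => hXl j i)
      simpa [smul_eq_mul, hdecomp i] using this
    have h1 : |∑ j, α j * Zlmerged j i| ≤ φ (X i) := by
      calc |∑ j, α j * Zlmerged j i| ≤ ∑ j, |α j * Zlmerged j i| :=
            Finset.abs_sum_le_sum_abs _ _
        _ = ∑ j, α j * |Zlmerged j i| := by
            refine Finset.sum_congr rfl fun j _ => ?_
            rw [abs_mul, abs_of_nonneg (hα j)]
        _ ≤ ∑ j, α j * φ (Xl j i) := by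
            refine Finset.sum_le_sum fun j _ => ?_
            exact mul_le_mul_of_nonneg_left ((hZlm j i).trans_eq (hZl j i)) (hα j)
        _ ≤ φ (X i) := jensen
    calc |Zfinal i| = |η * Z i + (1 - η) * ∑ j, α j * Zlmerged j i| := by rw [hZf i]
      _ ≤ |η * Z i| + |(1 - η) * ∑ j, α j * Zlmerged j i| := abs_add_le _ _
      _ = η * |Z i| + (1 - η) * |∑ j, α j * Zlmerged j i| := by
          have h2 : (0:ℝ) ≤ 1 - η := by linarith
          rw [abs_mul, abs_mul, abs_of_nonneg hη0.le, abs_of_nonneg h2]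
      _ ≤ η * |Z i| + (1 - η) * φ (X i) :=
          add_le_add le_rfl (mul_le_mul_of_nonneg_left h1 (by linarith))
      _ = |Z i| := by rw [hZ i]; ring
  apply Real.sqrt_le_sqrt
  refine Finset.sum_le_sum fun i _ => ?_
  have := sq_abs (Zfinal i) ▸ sq_abs (Z i) ▸
    pow_le_pow_left₀ (abs_nonneg _) (key i) 2
  simpa [sq_abs] using this
end
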